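/- The minimum sum-subspace distance of the lifted s-interleaved linearized Reed–Solomon code is 2(n_t − k + 1); i.e., for distinct message tuples f ≠ g, d_{ΣS}(V(f), V(g)) ≥ 2(n_t − k + 1), and this bound is attained. -/

import Mathlib

open Polynomial Finset

noncomputable section

variable {Fq F : Type*} [Field Fq] [Fintype Fq] [Field F] [Fintype F] [Algebra Fq F]

/-- Generalized power `N_i(a) = σ^{i-1}(a)⋯σ(a)a`, with `N_0(a) = 1`. -/
def genNorm (σ : F → F) (a : F) : ℕ → F
  | 0 => 1
  | i + 1 => σ^[i] a * genNorm σ a i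

/-- Generalized operator evaluation `f(b)_a = Σ_i f_i σ^i(b) N_i(a)`. -/
def opEval (σ : F → F) (f : Polynomial F) (a b : F) : F :=
  ∑ i ∈ f.support, f.coeff i * σ^[i] b * genNorm σ a i

/-- The lifted subspace `V_i(f)`: the `F_q`-span of the rows
`(β_j, f^{(1)}(β_j)_{a},…,f^{(s)}(β_j)_{a})`, with σ the Frobenius `x ↦ x^q`. -/
def liftedSpace (Fq : Type*) [Field Fq] [Fintype Fq] {F : Type*} [Field F]
    [Algebra Fq F] {n s : ℕ} (a : F) (β : Fin n → F) (f : Fin s → Polynomial F) :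
    Submodule Fq (F × (Fin s → F)) :=
  Submodule.span Fq (Set.range (fun j : Fin n =>
    ((β j, fun l : Fin s => opEval (fun x : F => x ^ Fintype.card Fq) (f l) a (β j)) :
      F × (Fin s → F))))

/-! For fixed `a`, the map `b ↦ f(b)_a` is `F_q`-linear, and `V_i(f)` is the image of
`⟨β^{(i)}⟩` under the injective graph map `b ↦ (b, f(b)_{a_i})`. Hence `dim V_i(f) = n_i`, and
`V_i(f) ∩ V_i(g)` is the image of the subspace `T_i ⊆ ⟨β^{(i)}⟩` on which `f` and `g` agree, so
`d_ΣS(V(f), V(g)) = 2 (n_t - Σ_i dim T_i)`.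

If `f^{(l)} ≠ g^{(l)}`, every `T_i` lies in the root space of `h = f^{(l)} - g^{(l)}` at `a_i`,
and the root spaces of a nonzero skew polynomial at pairwise non-conjugate `a_i` have total
dimension at most its degree, here `≤ k - 1`. This goes by induction on the degree: given a root
`b` at `a_i`, right division by `X - c` with `c = σ(b) a_i b⁻¹` is exact, and the root spaces of
`X - c` at the `a_i` have total dimension at most one, since nonzero roots at `a_i` and `a_j`
make `a_i` and `a_j` σ-conjugate, and two roots at the same `a_i` have a σ-fixed, i.e.
`F_q`-rational, quotient. The bound is attained by `f = (h, 0, …, 0)` and `g = 0`, where `h` is a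
monic skew polynomial of degree `k - 1` vanishing at `k - 1` of the `β_j^{(i)}`, built as a left
product of linear factors. -/

open LinearMap (ker)
open Module (finrank)

lemma LinearMap.finrank_ker_comp_le {K U V W : Type*} [Field K] [AddCommGroup U] [Module K U]
    [FiniteDimensional K U] [AddCommGroup V] [Module K V] [FiniteDimensional K V]
    [AddCommGroup W] [Module K W] (g : V →ₗ[K] W) (f : U →ₗ[K] V) :
    finrank K (ker (g ∘ₗ f)) ≤ finrank K (ker g) + finrank K (ker f) := by
  set p := ker (g ∘ₗ f)
  have hrange : finrank K (range (f.domRestrict p)) ≤ finrank K (ker g) :=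
    Submodule.finrank_mono (by rintro _ ⟨x, rfl⟩; exact x.2)
  have hker : finrank K (ker (f.domRestrict p)) ≤ finrank K (ker f) := by
    rw [ker_domRestrict, (Submodule.equivMapOfInjective _ p.injective_subtype _).finrank_eq,
      Submodule.map_comap_subtype]
    exact Submodule.finrank_mono inf_le_right
  have := (f.domRestrict p).finrank_range_add_finrank_ker
  omega

lemma Submodule.map_id_prod_inf_map_id_prod {R V M : Type*} [Ring R] [AddCommGroup V] [Module R V]
    [AddCommGroup M] [Module R M] (W : Submodule R V) (S T : V →ₗ[R] M) :
    W.map (LinearMap.id.prod S) ⊓ W.map (LinearMap.id.prod T) =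
      (W ⊓ LinearMap.eqLocus S T).map (LinearMap.id.prod S) := by
  ext ⟨x, y⟩
  simp only [Submodule.mem_inf, Submodule.mem_map, LinearMap.prod_apply, LinearMap.id_coe,
    Function.prod_apply, id_eq, Prod.mk.injEq, existsAndEq, true_and, LinearMap.mem_eqLocus]
  constructor
  · rintro ⟨⟨hx, rfl⟩, -, hT⟩
    exact ⟨⟨hx, hT.symm⟩, rfl⟩
  · rintro ⟨⟨hx, hST⟩, rfl⟩
    exact ⟨⟨hx, rfl⟩, hx, hST.symm⟩

lemma Submodule.finrank_map_id_prod {R V M : Type*} [Ring R] [StrongRankCondition R]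
    [AddCommGroup V] [Module R V] [AddCommGroup M] [Module R M] (W : Submodule R V)
    (S : V →ₗ[R] M) : finrank R (W.map (LinearMap.id.prod S)) = finrank R W :=
  (W.equivMapOfInjective _ fun _ _ h => congrArg Prod.fst h).finrank_eq.symm

lemma LinearIndependent.card_le_finrank_of_forall_mem {K M ι : Type*} [Field K] [AddCommGroup M]
    [Module K M] {v : ι → M} (hv : LinearIndependent K v) {P : Submodule K M}
    [FiniteDimensional K P] {T : Finset ι} (hT : ∀ j ∈ T, v j ∈ P) :
    T.card ≤ finrank K P := by
  have hvT : LinearIndependent K fun j : T => (⟨v j, hT j j.2⟩ : P) :=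
    .of_comp P.subtype (hv.comp _ Subtype.val_injective)
  simpa using hvT.fintype_card_le_finrank

lemma FiniteField.mem_range_algebraMap_of_frobeniusAlgHom_eq {K L : Type*} [Field K] [Fintype K]
    [Field L] [Algebra K L] [Finite L] {x : L} (hx : frobeniusAlgHom K L x = x) :
    x ∈ Set.range (algebraMap K L) := by
  rw [IsGalois.mem_range_algebraMap_iff_fixed]
  intro τ
  obtain ⟨i, rfl⟩ := (bijective_frobeniusAlgEquivOfAlgebraic_pow K L).2 τ
  rw [AlgEquiv.coe_pow]
  exact Function.iterate_fixed hx _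

section OpEval

variable {L : Type*} [Field L]

section

variable (σ : L → L)

lemma opEval_eq_lsum (f : L[X]) (a b : L) :
    opEval σ f a b = lsum (fun i => LinearMap.mulRight L (σ^[i] b * genNorm σ a i)) f := by
  simp only [opEval, lsum_apply, Polynomial.sum_def, LinearMap.mulRight_apply, mul_assoc]

lemma opEval_zero (a b : L) : opEval σ 0 a b = 0 := by
  simp [opEval_eq_lsum]

lemma opEval_add (f g : L[X]) (a b : L) :
    opEval σ (f + g) a b = opEval σ f a b + opEval σ g a b := by
  simp only [opEval_eq_lsum, map_add]

lemma opEval_sub (f g : L[X]) (a b : L) :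
    opEval σ (f - g) a b = opEval σ f a b - opEval σ g a b := by
  simp only [opEval_eq_lsum, map_sub]

lemma opEval_C_mul (c : L) (f : L[X]) (a b : L) :
    opEval σ (C c * f) a b = c * opEval σ f a b := by
  simp only [opEval_eq_lsum, ← smul_eq_C_mul, map_smul, smul_eq_mul]

lemma opEval_monomial (n : ℕ) (e a b : L) :
    opEval σ (monomial n e) a b = e * σ^[n] b * genNorm σ a n := by
  simp [opEval_eq_lsum, mul_assoc]

lemma opEval_C (c a b : L) : opEval σ (C c) a b = c * b := by
  simp [← monomial_zero_left, opEval_monomial, genNorm]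

lemma opEval_X_sub_C (c a b : L) : opEval σ (X - C c) a b = σ b * a - c * b := by
  rw [opEval_sub, ← monomial_one_one_eq_X, opEval_monomial, opEval_C]
  simp [genNorm]

end

variable (σ : L →+* L)

lemma map_genNorm_mul (a : L) (i : ℕ) : σ (genNorm σ a i) * a = genNorm σ a (i + 1) := by
  induction i with
  | zero => simp [genNorm]
  | succ i ih =>
    rw [genNorm, map_mul, mul_assoc, ih, ← Function.iterate_succ_apply' σ]
    rfl

lemma opEval_apply_zero (f : L[X]) (a : L) : opEval σ f a 0 = 0 := by
  simp [opEval, iterate_map_zero]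

/-- `X * f.map σ` is the skew product `X · f`. -/
lemma opEval_X_mul_map (f : L[X]) (a b : L) :
    opEval σ (X * f.map σ) a b = σ (opEval σ f a b) * a := by
  induction f using Polynomial.induction_on' with
  | add f g hf hg =>
    rw [Polynomial.map_add, mul_add, opEval_add, opEval_add, hf, hg, map_add, add_mul]
  | monomial n e =>
    rw [map_monomial, X_mul_monomial, opEval_monomial, opEval_monomial, map_mul, map_mul,
      ← Function.iterate_succ_apply' σ, ← map_genNorm_mul]
    ring

/-- The skew identity `e X^(t+1) = e X^t (X - c) + e σ^t(c) X^t`. -/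
lemma opEval_monomial_succ (c : L) (t : ℕ) (e a b : L) :
    opEval σ (monomial (t + 1) e) a b =
      opEval σ (monomial t e) a (opEval σ (X - C c) a b) +
        opEval σ (monomial t (e * σ^[t] c)) a b := by
  simp only [opEval_monomial, opEval_X_sub_C, ← RingHom.coe_pow, map_sub, map_mul,
    genNorm, pow_succ, RingHom.coe_mul, Function.comp_apply]
  ring

/-- Right division `f = g (X - c) + r` in the skew polynomial ring. -/
theorem exists_opEval_eq_opEval_X_sub_C_add (c : L) (d : ℕ) (f : L[X])
    (hf : f.natDegree ≤ d + 1) :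
    ∃ g : L[X], ∃ r : L, g.natDegree ≤ d ∧ g.coeff d = f.coeff (d + 1) ∧
      ∀ a b, opEval σ f a b = opEval σ g a (opEval σ (X - C c) a b) + r * b := by
  induction d generalizing f with
  | zero =>
    refine ⟨C (f.coeff 1), f.coeff 0 + f.coeff 1 * c, by simp, by simp, fun a b => ?_⟩
    conv_lhs => rw [eq_X_add_C_of_natDegree_le_one hf]
    rw [opEval_add, opEval_C_mul, opEval_C, opEval_C, opEval_X_sub_C, ← monomial_one_one_eq_X,
      opEval_monomial]
    simp only [genNorm, Function.iterate_one, Function.iterate_zero, id_eq, mul_one, one_mul]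
    ring
  | succ d ih =>
    set e := f.coeff (d + 2)
    have herase : (f.erase (d + 2)).natDegree ≤ d + 1 := by
      rw [natDegree_le_iff_coeff_eq_zero]
      intro j hj
      rw [coeff_erase]
      split_ifs
      · rfl
      · exact coeff_eq_zero_of_natDegree_lt (by omega)
    obtain ⟨g, r, hg, -, hfg⟩ := ih (monomial (d + 1) (e * σ^[d + 1] c) + f.erase (d + 2))
      ((natDegree_add_le _ _).trans (max_le (natDegree_monomial_le _) herase))
    refine ⟨monomial (d + 1) e + g, r, (natDegree_add_le _ _).trans
      (max_le (natDegree_monomial_le _) (hg.trans d.le_succ)), ?_, fun a b => ?_⟩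
    · rw [coeff_add, coeff_monomial_same, coeff_eq_zero_of_natDegree_lt (by omega), add_zero]
    · have := hfg a b
      rw [opEval_add] at this
      conv_lhs => rw [← monomial_add_erase f (d + 2)]
      rw [opEval_add, opEval_monomial_succ σ c, opEval_add]
      linear_combination this

lemma exists_opEval_eq_opEval_X_sub_C_of_root {f : L[X]} {d : ℕ} (hd : f.natDegree = d + 1)
    {a b : L} (hb0 : b ≠ 0) (hb : opEval σ f a b = 0) :
    ∃ g : L[X], g ≠ 0 ∧ g.natDegree = d ∧
      ∀ a' b', opEval σ f a' b' = opEval σ g a' (opEval σ (X - C (σ b * a * b⁻¹)) a' b') := by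
  obtain ⟨g, r, hg, hgc, hfg⟩ :=
    exists_opEval_eq_opEval_X_sub_C_add σ (σ b * a * b⁻¹) d f hd.le
  have hψ : opEval σ (X - C (σ b * a * b⁻¹)) a b = 0 := by
    rw [opEval_X_sub_C, inv_mul_cancel_right₀ hb0, sub_self]
  have hr : r = 0 := by
    have := hfg a b
    rw [hb, hψ, opEval_apply_zero, zero_add, eq_comm, mul_eq_zero] at this
    exact this.resolve_right hb0
  have hgc' : g.coeff d ≠ 0 := by
    rw [hgc, ← hd]
    exact leadingCoeff_ne_zero.mpr (ne_zero_of_natDegree_gt (n := d) (by omega))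
  refine ⟨g, fun h => hgc' (by rw [h, coeff_zero]), le_antisymm hg (le_natDegree_of_ne_zero hgc'),
    fun a' b' => by rw [hfg, hr, zero_mul, add_zero]⟩

/-- Each step replaces `h` by `(X - c) h` with `c = σ(v) a_j / v`, `v = h(b_j)_{a_j}`, which
kills the new point and keeps the old roots. -/
theorem exists_monic_opEval_eq_zero {ι : Type*} (s : Finset ι) (a b : ι → L) :
    ∃ h : L[X], h.Monic ∧ h.natDegree = s.card ∧
      ∀ i ∈ s, opEval σ h (a i) (b i) = 0 := by
  classical
  induction s using Finset.induction_on with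
  | empty => exact ⟨1, monic_one, by simp, by simp⟩
  | insert j s hj ih =>
    obtain ⟨h, hmon, hdeg, hroot⟩ := ih
    set v := opEval σ h (a j) (b j)
    have hXh : (X * h.map σ).Monic := monic_X.mul (hmon.map σ)
    have hXdeg : (X * h.map σ).natDegree = s.card + 1 := by
      rw [natDegree_mul X_ne_zero (hmon.map σ).ne_zero, natDegree_X, hmon.natDegree_map, hdeg,
        add_comm]
    have hlt : (C (σ v * a j / v) * h).natDegree < (X * h.map σ).natDegree := by
      rw [hXdeg]
      exact (natDegree_C_mul_le _ _).trans_lt (by omega)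
    refine ⟨X * h.map σ - C (σ v * a j / v) * h, hXh.sub_of_left (degree_lt_degree hlt), by
      rw [natDegree_sub_eq_left_of_natDegree_lt hlt, hXdeg, Finset.card_insert_of_notMem hj],
      fun i hi => ?_⟩
    rw [opEval_sub, opEval_X_mul_map, opEval_C_mul]
    rcases Finset.mem_insert.mp hi with rfl | hi
    · rcases eq_or_ne v 0 with hv | hv
      · simp [v, hv]
      · rw [div_mul_cancel₀ _ hv, sub_self]
    · simp [hroot i hi]

lemma exists_conj_of_mul_eq_mul {a a' c u v : L} (hu : u ≠ 0) (hv : v ≠ 0)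
    (hua : σ u * a = c * u) (hva : σ v * a' = c * v) :
    ∃ w : L, w ≠ 0 ∧ σ w * a * w⁻¹ = a' := by
  have hσv : σ v ≠ 0 := (map_ne_zero σ).mpr hv
  refine ⟨u / v, div_ne_zero hu hv, ?_⟩
  rw [map_div₀, inv_div]
  field_simp
  linear_combination v * hua - u * hva

end OpEval

section RootSpaces

variable {K L : Type*} [Field K] [Field L] [Algebra K L] (σ : L →ₐ[K] L)

def opEvalₗ (a : L) (f : L[X]) : L →ₗ[K] L where
  toFun := opEval σ f a
  map_add' x y := by
    simp only [opEval, ← AlgHom.coe_pow, map_add, mul_add, add_mul, Finset.sum_add_distrib]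
  map_smul' k x := by
    simp only [opEval, RingHom.id_apply, Finset.smul_sum]
    refine Finset.sum_congr rfl fun i _ => ?_
    rw [← AlgHom.coe_pow, map_smul, mul_smul_comm, smul_mul_assoc]

@[simp] lemma opEvalₗ_apply (a : L) (f : L[X]) (b : L) :
    opEvalₗ σ a f b = opEval σ f a b := rfl

lemma finrank_ker_opEvalₗ_X_sub_C_le_one
    (hσ : ∀ x, σ x = x → x ∈ Set.range (algebraMap K L)) {a : L} (ha : a ≠ 0) (c : L) :
    finrank K (ker (opEvalₗ σ a (X - C c))) ≤ 1 := by
  have hmem : ∀ u, u ∈ ker (opEvalₗ σ a (X - C c)) ↔ σ u * a = c * u := by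
    simp [opEval_X_sub_C, sub_eq_zero]
  by_cases h : ker (opEvalₗ σ a (X - C c)) = ⊥
  · rw [h, finrank_bot]
    exact zero_le_one
  obtain ⟨v, hv, hv0⟩ := (Submodule.ne_bot_iff _).mp h
  refine finrank_le_one ⟨v, hv⟩ fun ⟨u, hu⟩ => ?_
  rw [hmem] at hu hv
  have hfix : σ (u / v) = u / v := by
    rw [map_div₀, div_eq_div_iff ((map_ne_zero σ).mpr hv0) hv0]
    refine mul_right_cancel₀ ha ?_
    linear_combination v * hu - u * hv
  obtain ⟨k, hk⟩ := hσ _ hfix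
  exact ⟨k, Subtype.ext (by simp [Algebra.smul_def, hk, div_mul_cancel₀ _ hv0])⟩

variable {ι : Type*} [Fintype ι] {a : ι → L}

lemma sum_finrank_ker_opEvalₗ_X_sub_C_le_one
    (hσ : ∀ x, σ x = x → x ∈ Set.range (algebraMap K L)) (ha0 : ∀ i, a i ≠ 0)
    (ha : ∀ i j, i ≠ j → ¬∃ w : L, w ≠ 0 ∧ σ w * a i * w⁻¹ = a j) (c : L) :
    ∑ i, finrank K (ker (opEvalₗ σ (a i) (X - C c))) ≤ 1 := by
  have hmem : ∀ i u, u ∈ ker (opEvalₗ σ (a i) (X - C c)) ↔ σ u * a i = c * u := by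
    simp [opEval_X_sub_C, sub_eq_zero]
  by_cases h : ∃ i, ker (opEvalₗ σ (a i) (X - C c)) ≠ ⊥
  · obtain ⟨i₀, hi₀⟩ := h
    obtain ⟨u, hu, hu0⟩ := (Submodule.ne_bot_iff _).mp hi₀
    rw [Finset.sum_eq_single i₀ _ (by simp)]
    · exact finrank_ker_opEvalₗ_X_sub_C_le_one σ hσ (ha0 i₀) c
    intro j _ hj
    suffices ker (opEvalₗ σ (a j) (X - C c)) = ⊥ by rw [this, finrank_bot]
    by_contra hne
    obtain ⟨v, hv, hv0⟩ := (Submodule.ne_bot_iff _).mp hne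
    rw [hmem] at hu hv
    exact ha i₀ j (Ne.symm hj) (exists_conj_of_mul_eq_mul (σ : L →+* L) hu0 hv0 hu hv)
  · simp only [not_exists, not_not] at h
    rw [Finset.sum_eq_zero fun i _ => by rw [h i, finrank_bot]]
    exact zero_le_one

theorem sum_finrank_ker_opEvalₗ_le [FiniteDimensional K L]
    (hσ : ∀ x, σ x = x → x ∈ Set.range (algebraMap K L)) (ha0 : ∀ i, a i ≠ 0)
    (ha : ∀ i j, i ≠ j → ¬∃ w : L, w ≠ 0 ∧ σ w * a i * w⁻¹ = a j)
    {f : L[X]} (hf : f ≠ 0) : ∑ i, finrank K (ker (opEvalₗ σ (a i) f)) ≤ f.natDegree := by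
  induction hd : f.natDegree generalizing f with
  | zero =>
    obtain ⟨e, rfl⟩ := natDegree_eq_zero.mp hd
    have he : e ≠ 0 := by rintro rfl; exact hf C_0
    have hker : ∀ i, ker (opEvalₗ σ (a i) (C e)) = ⊥ := fun i => by
      ext b
      simp [opEval_C, he]
    exact (Finset.sum_eq_zero fun i _ => by rw [hker i, finrank_bot]).le
  | succ d ih =>
    by_cases h : ∀ i, ker (opEvalₗ σ (a i) f) = ⊥
    · rw [Finset.sum_eq_zero fun i _ => by rw [h i, finrank_bot]]
      exact Nat.zero_le _
    obtain ⟨i₀, hi₀⟩ := not_forall.mp h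
    obtain ⟨b, hb, hb0⟩ := (Submodule.ne_bot_iff _).mp hi₀
    obtain ⟨g, hg, hgd, hfg⟩ :=
      exists_opEval_eq_opEval_X_sub_C_of_root (σ : L →+* L) hd hb0 hb
    set ψ : L[X] := X - C (σ b * a i₀ * b⁻¹)
    have hcomp : ∀ i, opEvalₗ σ (a i) f = opEvalₗ σ (a i) g ∘ₗ opEvalₗ σ (a i) ψ :=
      fun i => LinearMap.ext fun b' => hfg (a i) b'
    calc ∑ i, finrank K (ker (opEvalₗ σ (a i) f))
        ≤ ∑ i, (finrank K (ker (opEvalₗ σ (a i) g)) +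
            finrank K (ker (opEvalₗ σ (a i) ψ))) :=
          Finset.sum_le_sum fun i _ => hcomp i ▸ LinearMap.finrank_ker_comp_le _ _
      _ = ∑ i, finrank K (ker (opEvalₗ σ (a i) g)) +
            ∑ i, finrank K (ker (opEvalₗ σ (a i) ψ)) :=
          Finset.sum_add_distrib
      _ ≤ d + 1 :=
          add_le_add (ih hg hgd) (sum_finrank_ker_opEvalₗ_X_sub_C_le_one σ hσ ha0 ha _)

end RootSpaces

section AgreeSpaces

variable {K L : Type*} [Field K] [Field L] [Algebra K L] (σ : L →ₐ[K] L) {n s : ℕ}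

def opEvalPi (a : L) (f : Fin s → L[X]) : L →ₗ[K] Fin s → L :=
  LinearMap.pi fun l => opEvalₗ σ a (f l)

def agreeSpace (a : L) (β : Fin n → L) (f g : Fin s → L[X]) : Submodule K L :=
  Submodule.span K (Set.range β) ⊓ LinearMap.eqLocus (opEvalPi σ a f) (opEvalPi σ a g)

lemma finrank_agreeSpace_le (a : L) (β : Fin n → L) (f g : Fin s → L[X]) :
    finrank K (agreeSpace σ a β f g) ≤ n := by
  have := FiniteDimensional.span_of_finite K (Set.finite_range β)
  exact (Submodule.finrank_mono inf_le_left).trans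
    ((finrank_range_le_card β).trans_eq (Fintype.card_fin n))

lemma agreeSpace_le_ker_sub (a : L) (β : Fin n → L) (f g : Fin s → L[X]) (l : Fin s) :
    agreeSpace σ a β f g ≤ ker (opEvalₗ σ a (f l - g l)) := fun b hb => by
  have := congrFun (LinearMap.mem_eqLocus.mp hb.2) l
  simpa [opEvalPi, opEval_sub, sub_eq_zero] using this

lemma agreeSpace_single_zero (a : L) (β : Fin n → L) (l : Fin s) (h : L[X]) :
    agreeSpace σ a β (Pi.single l h) 0 =
      Submodule.span K (Set.range β) ⊓ ker (opEvalₗ σ a h) := by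
  ext b
  simp only [agreeSpace, Submodule.mem_inf, LinearMap.mem_eqLocus, LinearMap.mem_ker,
    funext_iff, opEvalPi, LinearMap.pi_apply, opEvalₗ_apply, Pi.zero_apply, opEval_zero]
  refine and_congr_right fun _ => ⟨fun H => by simpa using H l, fun H l' => ?_⟩
  rcases eq_or_ne l' l with rfl | hl
  · simpa using H
  · simp [hl, opEval_zero]

end AgreeSpaces

section LiftedSpaces

open FiniteField

variable {K L : Type*} [Field K] [Fintype K] [Field L] [Algebra K L] {s : ℕ}

lemma liftedSpace_eq_map {n : ℕ} (a : L) (β : Fin n → L) (f : Fin s → L[X]) :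
    liftedSpace K a β f = (Submodule.span K (Set.range β)).map
      (LinearMap.id.prod (opEvalPi (frobeniusAlgHom K L) a f)) := by
  rw [liftedSpace, Submodule.map_span, ← Set.range_comp]
  rfl

lemma finrank_sup_sub_finrank_inf_liftedSpace [Finite L] {n : ℕ} (a : L) {β : Fin n → L}
    (hβ : LinearIndependent K β) (f g : Fin s → L[X]) :
    finrank K ↥(liftedSpace K a β f ⊔ liftedSpace K a β g) -
        finrank K ↥(liftedSpace K a β f ⊓ liftedSpace K a β g) =
      2 * (n - finrank K (agreeSpace (frobeniusAlgHom K L) a β f g)) := by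
  have hV : ∀ f : Fin s → L[X], finrank K (liftedSpace K a β f) = n := fun f => by
    rw [liftedSpace_eq_map, Submodule.finrank_map_id_prod, finrank_span_eq_card hβ,
      Fintype.card_fin]
  have hinf : finrank K ↥(liftedSpace K a β f ⊓ liftedSpace K a β g) =
      finrank K (agreeSpace (frobeniusAlgHom K L) a β f g) := by
    rw [liftedSpace_eq_map, liftedSpace_eq_map, Submodule.map_id_prod_inf_map_id_prod,
      Submodule.finrank_map_id_prod, agreeSpace]
  have hsum :=
    Submodule.finrank_sup_add_finrank_inf_eq (liftedSpace K a β f) (liftedSpace K a β g)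
  have hle := finrank_agreeSpace_le (frobeniusAlgHom K L) a β f g
  rw [hV, hV] at hsum
  omega

variable {ι : Type*} [Fintype ι] {a : ι → L} {n : ι → ℕ} {β : ∀ i, Fin (n i) → L}

lemma sum_finrank_sup_sub_finrank_inf_liftedSpace [Finite L]
    (hβ : ∀ i, LinearIndependent K (β i)) (f g : Fin s → L[X]) :
    ∑ i, (finrank K ↥(liftedSpace K (a i) (β i) f ⊔ liftedSpace K (a i) (β i) g) -
        finrank K ↥(liftedSpace K (a i) (β i) f ⊓ liftedSpace K (a i) (β i) g)) =
      2 * (∑ i, n i - ∑ i, finrank K (agreeSpace (frobeniusAlgHom K L) (a i) (β i) f g)) := by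
  rw [Finset.sum_congr rfl fun i _ => finrank_sup_sub_finrank_inf_liftedSpace (a i) (hβ i) f g,
    ← Finset.mul_sum, Finset.sum_tsub_distrib _ fun i _ => finrank_agreeSpace_le _ _ _ _ _]

lemma sum_finrank_agreeSpace_le [Finite L] (ha0 : ∀ i, a i ≠ 0)
    (ha : ∀ i j, i ≠ j → ¬∃ w : L, w ≠ 0 ∧ frobeniusAlgHom K L w * a i * w⁻¹ = a j)
    {k : ℕ} {f g : Fin s → L[X]} (hf : ∀ l, (f l).degree < (k : WithBot ℕ))
    (hg : ∀ l, (g l).degree < (k : WithBot ℕ)) (hfg : f ≠ g) :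
    ∑ i, finrank K (agreeSpace (frobeniusAlgHom K L) (a i) (β i) f g) ≤ k - 1 := by
  obtain ⟨l, hl⟩ := Function.ne_iff.mp hfg
  have hfg0 : f l - g l ≠ 0 := sub_ne_zero.mpr hl
  have hdeg : (f l - g l).natDegree < k := (natDegree_lt_iff_degree_lt hfg0).mpr
    ((degree_sub_le _ _).trans_lt (max_lt (hf l) (hg l)))
  calc ∑ i, finrank K (agreeSpace (frobeniusAlgHom K L) (a i) (β i) f g)
      ≤ ∑ i, finrank K (ker (opEvalₗ (frobeniusAlgHom K L) (a i) (f l - g l))) :=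
        Finset.sum_le_sum fun i _ => Submodule.finrank_mono (agreeSpace_le_ker_sub _ _ _ _ _ l)
    _ ≤ (f l - g l).natDegree := sum_finrank_ker_opEvalₗ_le _
        (fun _ => mem_range_algebraMap_of_frobeniusAlgHom_eq) ha0 ha hfg0
    _ ≤ k - 1 := by omega

lemma exists_sum_finrank_agreeSpace_single_zero_eq [Finite L] (ha0 : ∀ i, a i ≠ 0)
    (ha : ∀ i j, i ≠ j → ¬∃ w : L, w ≠ 0 ∧ frobeniusAlgHom K L w * a i * w⁻¹ = a j)
    (hβ : ∀ i, LinearIndependent K (β i)) (l : Fin s) {m : ℕ} (hm : m ≤ ∑ i, n i) :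
    ∃ h : L[X], h ≠ 0 ∧ h.natDegree = m ∧
      ∑ i, finrank K (agreeSpace (frobeniusAlgHom K L) (a i) (β i) (Pi.single l h) 0) = m := by
  classical
  obtain ⟨S, -, hS⟩ :=
    Finset.exists_subset_card_eq (s := (Finset.univ : Finset (Σ i, Fin (n i)))) (by simpa using hm)
  obtain ⟨h, hmon, hdeg, hroot⟩ := exists_monic_opEval_eq_zero
    (frobeniusAlgHom K L : L →+* L) S (fun p => a p.1) (fun p => β p.1 p.2)
  rw [hS] at hdeg
  refine ⟨h, hmon.ne_zero, hdeg, ?_⟩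
  have hagree : ∀ i, finrank K (agreeSpace (frobeniusAlgHom K L) (a i) (β i) (Pi.single l h) 0) =
      finrank K ↥(Submodule.span K (Set.range (β i)) ⊓
        ker (opEvalₗ (frobeniusAlgHom K L) (a i) h)) :=
    fun i => by rw [agreeSpace_single_zero]
  simp only [hagree]
  refine le_antisymm ?_ ?_
  · calc _ ≤ ∑ i, finrank K (ker (opEvalₗ (frobeniusAlgHom K L) (a i) h)) :=
          Finset.sum_le_sum fun i _ => Submodule.finrank_mono inf_le_right
      _ ≤ h.natDegree := sum_finrank_ker_opEvalₗ_le _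
          (fun _ => mem_range_algebraMap_of_frobeniusAlgHom_eq) ha0 ha hmon.ne_zero
      _ = m := hdeg
  · calc m = ∑ i, (S.preimage (Sigma.mk i) sigma_mk_injective.injOn).card := by
          rw [← hS, ← Finset.card_sigma,
            Finset.sigma_preimage_mk_of_subset S (Finset.subset_univ _)]
      _ ≤ _ := Finset.sum_le_sum fun i _ => by
          refine (hβ i).card_le_finrank_of_forall_mem fun j hj => ?_
          exact ⟨Submodule.subset_span ⟨j, rfl⟩,
            hroot ⟨i, j⟩ (Finset.mem_preimage.mp hj)⟩

end LiftedSpaces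

/-- The minimum sum-subspace distance of the lifted `s`-interleaved linearized
Reed–Solomon code is `2(n_t − k + 1)`: any two codewords of distinct message
tuples have sum-subspace distance at least `2(n_t − k + 1)`, and this value is
attained. -/
theorem LILRS_min_distance (s ℓ k : ℕ) (hs : 1 ≤ s) (hk : 1 ≤ k)
    (n : Fin ℓ → ℕ) (hkn : k ≤ ∑ i, n i)
    (a : Fin ℓ → F) (ha0 : ∀ i, a i ≠ 0)
    (ha : ∀ i j, i ≠ j →
      ¬∃ c : F, c ≠ 0 ∧ c ^ Fintype.card Fq * a i * c⁻¹ = a j)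
    (β : (i : Fin ℓ) → Fin (n i) → F)
    (hβ : ∀ i, LinearIndependent Fq (β i)) :
    (∀ f g : Fin s → Polynomial F,
      (∀ l, (f l).degree < (k : WithBot ℕ)) → (∀ l, (g l).degree < (k : WithBot ℕ)) →
      f ≠ g →
      2 * ((∑ i, n i) - k + 1) ≤
        ∑ i, (Module.finrank Fq
            ↥(liftedSpace Fq (a i) (β i) f ⊔ liftedSpace Fq (a i) (β i) g) -
          Module.finrank Fq
            ↥(liftedSpace Fq (a i) (β i) f ⊓ liftedSpace Fq (a i) (β i) g))) ∧
    (∃ f g : Fin s → Polynomial F,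
      (∀ l, (f l).degree < (k : WithBot ℕ)) ∧ (∀ l, (g l).degree < (k : WithBot ℕ)) ∧
      f ≠ g ∧
      (∑ i, (Module.finrank Fq
            ↥(liftedSpace Fq (a i) (β i) f ⊔ liftedSpace Fq (a i) (β i) g) -
          Module.finrank Fq
            ↥(liftedSpace Fq (a i) (β i) f ⊓ liftedSpace Fq (a i) (β i) g))) =
        2 * ((∑ i, n i) - k + 1)) := by
  refine ⟨fun f g hf hg hfg => ?_, ?_⟩
  · rw [sum_finrank_sup_sub_finrank_inf_liftedSpace hβ]
    have := sum_finrank_agreeSpace_le ha0 ha hf hg hfg (β := β)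
    omega
  obtain ⟨h, hh0, hdeg, hsum⟩ :=
    exists_sum_finrank_agreeSpace_single_zero_eq ha0 ha hβ ⟨0, hs⟩ (m := k - 1) (by omega)
  have hhk : h.degree < (k : WithBot ℕ) := by
    rw [degree_eq_natDegree hh0, hdeg]
    exact_mod_cast Nat.sub_lt hk one_pos
  refine ⟨Pi.single ⟨0, hs⟩ h, 0, fun l => ?_, fun l => ?_, fun H => hh0 ?_, ?_⟩
  · rcases eq_or_ne l ⟨0, hs⟩ with rfl | hl
    · simpa using hhk
    · simp [hl]
  · simp
  · simpa using congrFun H ⟨0, hs⟩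
  · rw [sum_finrank_sup_sub_finrank_inf_liftedSpace hβ, hsum]
    omega
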